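/- arXiv:2605.25206 — 6 statements merged into one kernel-verified Lean document; each statement's English description precedes it below -/
import Mathlib

section
/- Suppose that for μ_Y-almost every y, N_y is a Stein operator for ν_y on C (i.e. for every probability measure ρ on ℝ: ρ = ν_y if and only if ∫ N_y f dρ = 0 for all f ∈ C), and that for every f ∈ C the map (x,y) ↦ N_y f(x) is essentially bounded with respect to ℙ_{M,Y} and jointly measurable. If the joint law ℙ_{X,Y} of (X,Y) equals the joint law ℙ_{M,Y} of (M,Y), then for every f ∈ C one has 𝔼[N_Y f(X) | σ(Y)] = 0 almost surely. -/
open MeasureTheory ProbabilityTheory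

/-! The kernel condition on rectangles identifies the law of `(M, Y)`, hence that of `(X, Y)`,
with `μ_Y ⊗ ν` (coordinates swapped). Disintegrating, the integral of `N_Y f(X)` over `{Y ∈ t}`
is `∫_t (∫ N_y f dν_y) dμ_Y(y)`, and the inner integral vanishes for a.e. `y` because `ρ = ν_y`
satisfies the Stein characterization. So `0` has the defining property of `𝔼[N_Y f(X) | σ(Y)]`. -/

section

variable {α β : Type*} [MeasurableSpace α] [MeasurableSpace β]
  {μ : Measure β} [SFinite μ] {ν : Kernel β α} [IsSFiniteKernel ν]

lemma eq_map_swap_compProd_of_apply_prod {ρ : Measure (α × β)} [IsFiniteMeasure ρ]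
    (h : ∀ A B, MeasurableSet A → MeasurableSet B → ρ (A ×ˢ B) = ∫⁻ y in B, ν y A ∂μ) :
    ρ = (μ ⊗ₘ ν).map Prod.swap :=
  Measure.ext_prod fun hA hB => by
    rw [h _ _ hA hB, Measure.map_apply measurable_swap (hA.prod hB), Set.preimage_swap_prod,
      Measure.compProd_apply_prod hB hA]

lemma setIntegral_preimage_snd_map_swap_compProd {g : α × β → ℝ}
    (hg : Integrable g ((μ ⊗ₘ ν).map Prod.swap)) {t : Set β} (ht : MeasurableSet t) :
    ∫ p in Prod.snd ⁻¹' t, g p ∂(μ ⊗ₘ ν).map Prod.swap = ∫ y in t, ∫ x, g (x, y) ∂ν y ∂μ := by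
  have hg' : Integrable (g ∘ Prod.swap) (μ ⊗ₘ ν) :=
    (integrable_map_measure hg.aestronglyMeasurable measurable_swap.aemeasurable).mp hg
  rw [setIntegral_map (measurable_snd ht) hg.aestronglyMeasurable measurable_swap.aemeasurable,
    show Prod.swap ⁻¹' (Prod.snd ⁻¹' t) = t ×ˢ (Set.univ : Set α) by ext; simp]
  simpa using Measure.setIntegral_compProd ht .univ hg'.integrableOn

end

lemma condExp_ae_eq_zero_of_forall_setIntegral_eq_zero {Ω : Type*} {m m0 : MeasurableSpace Ω}
    {P : Measure Ω} (hm : m ≤ m0) [SigmaFinite (P.trim hm)] {F : Ω → ℝ} (hF : Integrable F P)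
    (h : ∀ s, MeasurableSet[m] s → ∫ ω in s, F ω ∂P = 0) : P[F | m] =ᵐ[P] 0 :=
  (ae_eq_condExp_of_forall_setIntegral_eq hm hF (fun _ _ _ => integrableOn_zero)
    (fun s hs _ => by rw [h s hs, integral_zero]) aestronglyMeasurable_const).symm

theorem stein_dependence_necessary_condexp_general
    {Ω : Type*} [MeasurableSpace Ω] (P : Measure Ω) [IsProbabilityMeasure P]
    (M Y X : Ω → ℝ) (hY : Measurable Y) (hX : Measurable X)
    (ν : Kernel ℝ ℝ) [IsMarkovKernel ν]
    (hcond : ∀ A B : Set ℝ, MeasurableSet A → MeasurableSet B →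
      Measure.map (fun ω => (M ω, Y ω)) P (A ×ˢ B)
        = ∫⁻ y in B, ν y A ∂(Measure.map Y P))
    (C : Set (ℝ → ℝ)) (N : ℝ → (ℝ → ℝ) → ℝ → ℝ)
    (hStein : ∀ᵐ y ∂(Measure.map Y P), ∀ ρ : Measure ℝ, IsProbabilityMeasure ρ →
      (ρ = ν y ↔ ∀ f ∈ C, ∫ x, N y f x ∂ρ = 0))
    (hmeas : ∀ f ∈ C, Measurable (fun p : ℝ × ℝ => N p.2 f p.1))
    (hbdd : ∀ f ∈ C, ∃ B : ℝ,
      ∀ᵐ p ∂(Measure.map (fun ω => (M ω, Y ω)) P), |N p.2 f p.1| ≤ B)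
    (hlaw : Measure.map (fun ω => (X ω, Y ω)) P = Measure.map (fun ω => (M ω, Y ω)) P) :
    ∀ f ∈ C,
      P[(fun ω => N (Y ω) f (X ω)) | MeasurableSpace.comap Y inferInstance] =ᵐ[P] 0 := by
  intro f hf
  have hXY : Measurable fun ω => (X ω, Y ω) := hX.prodMk hY
  have hjoint := eq_map_swap_compProd_of_apply_prod hcond
  obtain ⟨B, hB⟩ := hbdd f hf
  have hg : Integrable (fun p : ℝ × ℝ => N p.2 f p.1) (Measure.map (fun ω => (X ω, Y ω)) P) :=
    .of_bound (hmeas f hf).aestronglyMeasurable B (by rw [hlaw]; simpa only [Real.norm_eq_abs])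
  have hmean : ∀ᵐ y ∂(Measure.map Y P), ∫ x, N y f x ∂ν y = 0 :=
    hStein.mono fun y hy => (hy (ν y) inferInstance).mp rfl f hf
  refine condExp_ae_eq_zero_of_forall_setIntegral_eq_zero hY.comap_le (hg.comp_measurable hXY) ?_
  rintro _ ⟨t, ht, rfl⟩
  refine (setIntegral_map (measurable_snd ht) hg.aestronglyMeasurable
    hXY.aemeasurable).symm.trans ?_
  rw [hlaw, hjoint] at hg ⊢
  rw [setIntegral_preimage_snd_map_swap_compProd hg ht,
    setIntegral_congr_ae ht (hmean.mono fun _ h _ => h), integral_zero]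

/-- If for `μ_Y`-a.e. `y`, `N y` is a Stein operator for `ν y` on `C`,
and for every `f ∈ C` the map `(x, y) ↦ N y f x` is `ℙ_{M,Y}`-essentially bounded and
jointly measurable, then `ℙ_{X,Y} = ℙ_{M,Y}` implies
`𝔼[N_Y f(X) | σ(Y)] = 0` a.s. for every `f ∈ C`. -/
theorem stein_dependence_necessary_condexp
    {Ω : Type*} [MeasurableSpace Ω] (P : Measure Ω) [IsProbabilityMeasure P]
    (M Y X : Ω → ℝ) (hM : Measurable M) (hY : Measurable Y) (hX : Measurable X)
    (ν : Kernel ℝ ℝ) [IsMarkovKernel ν]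
    (hcond : ∀ A B : Set ℝ, MeasurableSet A → MeasurableSet B →
      Measure.map (fun ω => (M ω, Y ω)) P (A ×ˢ B)
        = ∫⁻ y in B, ν y A ∂(Measure.map Y P))
    (C : Set (ℝ → ℝ)) (N : ℝ → (ℝ → ℝ) → ℝ → ℝ)
    (hStein : ∀ᵐ y ∂(Measure.map Y P), ∀ ρ : Measure ℝ, IsProbabilityMeasure ρ →
      (ρ = ν y ↔ ∀ f ∈ C, ∫ x, N y f x ∂ρ = 0))
    (hmeas : ∀ f ∈ C, Measurable (fun p : ℝ × ℝ => N p.2 f p.1))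
    (hbdd : ∀ f ∈ C, ∃ B : ℝ,
      ∀ᵐ p ∂(Measure.map (fun ω => (M ω, Y ω)) P), |N p.2 f p.1| ≤ B)
    (hlaw : Measure.map (fun ω => (X ω, Y ω)) P = Measure.map (fun ω => (M ω, Y ω)) P) :
    ∀ f ∈ C,
      P[(fun ω => N (Y ω) f (X ω)) | MeasurableSpace.comap Y inferInstance] =ᵐ[P] 0 :=
  stein_dependence_necessary_condexp_general P M Y X hY hX ν hcond C N hStein hmeas hbdd hlaw
end

section
/- Suppose Y takes only finitely many values y_1, …, y_N, each with positive probability, and that for each i, N_{y_i} is a Stein operator for ν_{y_i} on C (i.e. for every probability measure ρ on ℝ: ρ = ν_{y_i} if and only if ∫ N_{y_i} f dρ = 0 for all f ∈ C), and that for every f ∈ C̃ the map (x,y) ↦ N_y f(x,y) is essentially bounded with respect to ℙ_{M,Y} and jointly measurable. If the joint law ℙ_{X,Y} of (X,Y) equals the joint law ℙ_{M,Y} of (M,Y), then for every f ∈ C̃ one has 𝔼[N_Y f(X,Y) | σ(Y)] = 0 almost surely, and in particular 𝔼[N_Y f(X,Y)] = 0. -/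
/-! If `ν` disintegrates the law of `(M, Y)` along `Y`, then the law of `(Y, M)` is
`law(Y) ⊗ₘ ν`, so integrating `N_y f(·, y)` over `{Y ∈ A}` amounts to integrating the
inner integrals `∫ N_y f(x, y) dν_y(x)` over `A` against `law(Y)`. Each inner integral
vanishes because `N_y` is a Stein operator for `ν_y` and `Y` takes its values in `s`.
Since `(X, Y)` has the same law, `∫_{Y ∈ A} N_Y f(X, Y) dP = 0` for every Borel `A`,
which is the defining property of `𝔼[N_Y f(X, Y) | σ(Y)] = 0`. -/

open MeasureTheory ProbabilityTheory

namespace MeasureTheory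

variable {α β : Type*} [MeasurableSpace α] [MeasurableSpace β]

lemma Measure.map_swap_eq_compProd {m : Measure (β × α)} [IsFiniteMeasure m] {μ : Measure α}
    [SFinite μ] {κ : Kernel α β} [IsSFiniteKernel κ]
    (hm : ∀ A B, MeasurableSet A → MeasurableSet B → m (A ×ˢ B) = ∫⁻ y in B, κ y A ∂μ) :
    m.map Prod.swap = μ ⊗ₘ κ := by
  refine Measure.ext_prod fun {B A} hB hA => ?_
  rw [Measure.map_apply measurable_swap (hB.prod hA), Set.preimage_swap_prod, hm A B hA hB,
    Measure.compProd_apply_prod hB hA]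

lemma setIntegral_univ_prod_eq_zero_of_ae_integral_eq_zero {m : Measure (β × α)}
    [IsFiniteMeasure m] {μ : Measure α} [SFinite μ] {κ : Kernel α β} [IsSFiniteKernel κ]
    (hm : ∀ A B, MeasurableSet A → MeasurableSet B → m (A ×ˢ B) = ∫⁻ y in B, κ y A ∂μ)
    {E : Type*} [NormedAddCommGroup E] [NormedSpace ℝ E] {g : β × α → E} (hg : Integrable g m)
    (hκg : ∀ᵐ y ∂μ, ∫ x, g (x, y) ∂κ y = 0) {A : Set α} (hA : MeasurableSet A) :
    ∫ p in Set.univ ×ˢ A, g p ∂m = 0 := by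
  have hm' := Measure.map_swap_eq_compProd hm
  have hswap : Integrable (g ∘ Prod.swap) (μ ⊗ₘ κ) := by
    rw [← hm']
    exact (integrable_map_equiv MeasurableEquiv.prodComm _).2 hg
  have hemb : MeasurableEmbedding (Prod.swap : β × α → α × β) :=
    MeasurableEquiv.prodComm.measurableEmbedding
  calc ∫ p in Set.univ ×ˢ A, g p ∂m
      = ∫ q in A ×ˢ Set.univ, (g ∘ Prod.swap) q ∂(m.map Prod.swap) := by
        rw [hemb.setIntegral_map, Set.preimage_swap_prod]
        simp
    _ = ∫ y in A, ∫ x, g (x, y) ∂κ y ∂μ := by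
        rw [hm', Measure.setIntegral_compProd hA .univ hswap.integrableOn]
        simp
    _ = 0 := integral_eq_zero_of_ae (ae_restrict_of_ae hκg)

lemma condExp_comap_ae_eq_zero {Ω E : Type*} {mΩ : MeasurableSpace Ω} [NormedAddCommGroup E]
    [NormedSpace ℝ E] [CompleteSpace E] {P : Measure Ω} [IsFiniteMeasure P] {Y : Ω → α}
    (hY : Measurable Y) {G : Ω → E} (hG : Integrable G P)
    (hGY : ∀ A, MeasurableSet A → ∫ ω in Y ⁻¹' A, G ω ∂P = 0) :
    P[G | MeasurableSpace.comap Y inferInstance] =ᵐ[P] 0 := by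
  have : IsFiniteMeasure (P.trim hY.comap_le) := isFiniteMeasure_trim hY.comap_le
  refine (ae_eq_condExp_of_forall_setIntegral_eq hY.comap_le hG (fun _ _ _ => integrableOn_zero)
    ?_ aestronglyMeasurable_const).symm
  rintro _ ⟨A, hA, rfl⟩ -
  simp [hGY A hA]

end MeasureTheory

theorem stein_dependence_necessary_finite_range_general
    {Ω : Type*} [MeasurableSpace Ω] (P : Measure Ω) [IsProbabilityMeasure P]
    (M Y X : Ω → ℝ) (hY : Measurable Y) (hX : Measurable X)
    (ν : Kernel ℝ ℝ) [IsMarkovKernel ν]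
    (hcond : ∀ A B : Set ℝ, MeasurableSet A → MeasurableSet B →
      Measure.map (fun ω => (M ω, Y ω)) P (A ×ˢ B)
        = ∫⁻ y in B, ν y A ∂(Measure.map Y P))
    (C : Set (ℝ → ℝ)) (N : ℝ → (ℝ → ℝ) → ℝ → ℝ)
    (s : Finset ℝ) (hrange : ∀ ω, Y ω ∈ (s : Set ℝ))
    (hStein : ∀ y ∈ s, ∀ ρ : Measure ℝ, IsProbabilityMeasure ρ →
      (ρ = ν y ↔ ∀ f ∈ C, ∫ x, N y f x ∂ρ = 0))
    (hmeas : ∀ f : ℝ × ℝ → ℝ, (∀ y : ℝ, (fun x => f (x, y)) ∈ C) →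
      Measurable (fun p : ℝ × ℝ => N p.2 (fun x => f (x, p.2)) p.1))
    (hbdd : ∀ f : ℝ × ℝ → ℝ, (∀ y : ℝ, (fun x => f (x, y)) ∈ C) →
      ∃ B : ℝ, ∀ᵐ p ∂(Measure.map (fun ω => (M ω, Y ω)) P),
        |N p.2 (fun x => f (x, p.2)) p.1| ≤ B)
    (hlaw : Measure.map (fun ω => (X ω, Y ω)) P = Measure.map (fun ω => (M ω, Y ω)) P) :
    ∀ f : ℝ × ℝ → ℝ, (∀ y : ℝ, (fun x => f (x, y)) ∈ C) →
      (P[(fun ω => N (Y ω) (fun x => f (x, Y ω)) (X ω)) |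
          MeasurableSpace.comap Y inferInstance] =ᵐ[P] 0)
      ∧ ∫ ω, N (Y ω) (fun x => f (x, Y ω)) (X ω) ∂P = 0 := by
  intro f hf
  set g : ℝ × ℝ → ℝ := fun p => N p.2 (fun x => f (x, p.2)) p.1
  have hXY : Measurable fun ω => (X ω, Y ω) := hX.prodMk hY
  have hg_int : Integrable g (P.map fun ω => (M ω, Y ω)) := by
    obtain ⟨B, hB⟩ := hbdd f hf
    exact .of_bound (hmeas f hf).aestronglyMeasurable B hB
  have hStein_ae : ∀ᵐ y ∂P.map Y, ∫ x, g (x, y) ∂ν y = 0 := by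
    have hs : ∀ᵐ y ∂P.map Y, y ∈ s :=
      (ae_map_iff hY.aemeasurable s.measurableSet).2 (.of_forall hrange)
    filter_upwards [hs] with y hy
    exact (hStein y hy (ν y) inferInstance).1 rfl _ (hf y)
  have hG_int : Integrable (fun ω => g (X ω, Y ω)) P :=
    (integrable_map_measure (hmeas f hf).aestronglyMeasurable hXY.aemeasurable).1
      (hlaw ▸ hg_int)
  have hset : ∀ A, MeasurableSet A → ∫ ω in Y ⁻¹' A, g (X ω, Y ω) ∂P = 0 := by
    intro A hA
    rw [show Y ⁻¹' A = (fun ω => (X ω, Y ω)) ⁻¹' (Set.univ ×ˢ A) by ext; simp,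
      ← setIntegral_map (MeasurableSet.univ.prod hA) (hmeas f hf).aestronglyMeasurable
        hXY.aemeasurable, hlaw]
    exact setIntegral_univ_prod_eq_zero_of_ae_integral_eq_zero hcond hg_int hStein_ae hA
  exact ⟨condExp_comap_ae_eq_zero hY hG_int hset, by simpa using hset Set.univ .univ⟩

/-- Suppose `Y` takes only finitely many values, each with positive
probability, each `N y` (for `y` a value of `Y`) is a Stein operator for `ν y` on `C`,
and for every `f ∈ C̃` the map `(x, y) ↦ N y f(·,y) x` is `ℙ_{M,Y}`-essentially bounded
and jointly measurable. Then `ℙ_{X,Y} = ℙ_{M,Y}` implies that for every `f ∈ C̃`,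
`𝔼[N_Y f(X,Y) | σ(Y)] = 0` a.s., and in particular `𝔼[N_Y f(X,Y)] = 0`. -/
theorem stein_dependence_necessary_finite_range
    {Ω : Type*} [MeasurableSpace Ω] (P : Measure Ω) [IsProbabilityMeasure P]
    (M Y X : Ω → ℝ) (hM : Measurable M) (hY : Measurable Y) (hX : Measurable X)
    (ν : Kernel ℝ ℝ) [IsMarkovKernel ν]
    (hcond : ∀ A B : Set ℝ, MeasurableSet A → MeasurableSet B →
      Measure.map (fun ω => (M ω, Y ω)) P (A ×ˢ B)
        = ∫⁻ y in B, ν y A ∂(Measure.map Y P))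
    (C : Set (ℝ → ℝ)) (N : ℝ → (ℝ → ℝ) → ℝ → ℝ)
    (s : Finset ℝ) (hrange : ∀ ω, Y ω ∈ (s : Set ℝ))
    (hpos : ∀ y ∈ s, 0 < P (Y ⁻¹' {y}))
    (hStein : ∀ y ∈ s, ∀ ρ : Measure ℝ, IsProbabilityMeasure ρ →
      (ρ = ν y ↔ ∀ f ∈ C, ∫ x, N y f x ∂ρ = 0))
    (hmeas : ∀ f : ℝ × ℝ → ℝ, (∀ y : ℝ, (fun x => f (x, y)) ∈ C) →
      Measurable (fun p : ℝ × ℝ => N p.2 (fun x => f (x, p.2)) p.1))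
    (hbdd : ∀ f : ℝ × ℝ → ℝ, (∀ y : ℝ, (fun x => f (x, y)) ∈ C) →
      ∃ B : ℝ, ∀ᵐ p ∂(Measure.map (fun ω => (M ω, Y ω)) P),
        |N p.2 (fun x => f (x, p.2)) p.1| ≤ B)
    (hlaw : Measure.map (fun ω => (X ω, Y ω)) P = Measure.map (fun ω => (M ω, Y ω)) P) :
    ∀ f : ℝ × ℝ → ℝ, (∀ y : ℝ, (fun x => f (x, y)) ∈ C) →
      (P[(fun ω => N (Y ω) (fun x => f (x, Y ω)) (X ω)) |
          MeasurableSpace.comap Y inferInstance] =ᵐ[P] 0)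
      ∧ ∫ ω, N (Y ω) (fun x => f (x, Y ω)) (X ω) ∂P = 0 :=
  stein_dependence_necessary_finite_range_general P M Y X hY hX ν hcond C N s hrange hStein hmeas
    hbdd hlaw
end

section
/- Suppose that for μ_Y-almost every y, N_y is a Stein operator for ν_y on C (i.e. for every probability measure ρ on ℝ: ρ = ν_y if and only if ∫ N_y f dρ = 0 for all f ∈ C), and that for every f ∈ C̃ the map (x,y) ↦ N_y f(x,y) is jointly measurable, essentially bounded with respect to ℙ_{M,Y}, and continuous in the variable y for each fixed x. If the joint law ℙ_{X,Y} of (X,Y) equals the joint law ℙ_{M,Y} of (M,Y), then 𝔼[N_Y f(X,Y)] = 0 for every f ∈ C̃. -/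
open MeasureTheory ProbabilityTheory

/-- If for `μ_Y`-a.e. `y`, `N y` is a Stein operator for `ν y` on `C`,
and for every `f ∈ C̃` the map `(x, y) ↦ N y f(·,y) x` is jointly measurable,
`ℙ_{M,Y}`-essentially bounded, and continuous in `y` for each fixed `x`, then
`ℙ_{X,Y} = ℙ_{M,Y}` implies `𝔼[N_Y f(X,Y)] = 0` for every `f ∈ C̃`. -/
theorem stein_dependence_necessary
    {Ω : Type*} [MeasurableSpace Ω] (P : Measure Ω) [IsProbabilityMeasure P]
    (M Y X : Ω → ℝ) (hM : Measurable M) (hY : Measurable Y) (hX : Measurable X)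
    (ν : Kernel ℝ ℝ) [IsMarkovKernel ν]
    (hcond : ∀ A B : Set ℝ, MeasurableSet A → MeasurableSet B →
      Measure.map (fun ω => (M ω, Y ω)) P (A ×ˢ B)
        = ∫⁻ y in B, ν y A ∂(Measure.map Y P))
    (C : Set (ℝ → ℝ)) (N : ℝ → (ℝ → ℝ) → ℝ → ℝ)
    (hStein : ∀ᵐ y ∂(Measure.map Y P), ∀ ρ : Measure ℝ, IsProbabilityMeasure ρ →
      (ρ = ν y ↔ ∀ f ∈ C, ∫ x, N y f x ∂ρ = 0))
    (hmeas : ∀ f : ℝ × ℝ → ℝ, (∀ y : ℝ, (fun x => f (x, y)) ∈ C) →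
      Measurable (fun p : ℝ × ℝ => N p.2 (fun x => f (x, p.2)) p.1))
    (hbdd : ∀ f : ℝ × ℝ → ℝ, (∀ y : ℝ, (fun x => f (x, y)) ∈ C) →
      ∃ B : ℝ, ∀ᵐ p ∂(Measure.map (fun ω => (M ω, Y ω)) P),
        |N p.2 (fun x => f (x, p.2)) p.1| ≤ B)
    (hcont : ∀ f : ℝ × ℝ → ℝ, (∀ y : ℝ, (fun x => f (x, y)) ∈ C) →
      ∀ x : ℝ, Continuous (fun y => N y (fun x' => f (x', y)) x))
    (hlaw : Measure.map (fun ω => (X ω, Y ω)) P = Measure.map (fun ω => (M ω, Y ω)) P) :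
    ∀ f : ℝ × ℝ → ℝ, (∀ y : ℝ, (fun x => f (x, y)) ∈ C) →
      ∫ ω, N (Y ω) (fun x => f (x, Y ω)) (X ω) ∂P = 0 := by
  intro f hf
  set μ := Measure.map Y P with hμ
  have hμprob : IsProbabilityMeasure μ := Measure.isProbabilityMeasure_map hY.aemeasurable
  set g : ℝ × ℝ → ℝ := fun p => N p.2 (fun x => f (x, p.2)) p.1 with hg
  have hgmeas : Measurable g := hmeas f hf
  -- measure identity
  have hMY : Measure.map (fun ω => (M ω, Y ω)) P = (μ ⊗ₘ ν).map Prod.swap := by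
    have h1 : IsProbabilityMeasure (Measure.map (fun ω => (M ω, Y ω)) P) :=
      Measure.isProbabilityMeasure_map (hM.prodMk hY).aemeasurable
    have h2 : IsProbabilityMeasure ((μ ⊗ₘ ν).map Prod.swap) :=
      Measure.isProbabilityMeasure_map measurable_swap.aemeasurable
    refine MeasureTheory.ext_of_generate_finite _ generateFrom_prod.symm isPiSystem_prod ?_ ?_
    · rintro s ⟨A, hA, B, hB, rfl⟩
      replace hA : MeasurableSet A := hA
      replace hB : MeasurableSet B := hB
      rw [Measure.map_apply measurable_swap (hA.prod hB)]
      have : Prod.swap ⁻¹' (A ×ˢ B) = B ×ˢ A := by ext p; simp [Set.mem_prod, and_comm]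
      rw [this, Measure.compProd_apply_prod hB hA, hcond A B hA hB]
    · rw [h1.measure_univ, h2.measure_univ]
  -- integrability
  obtain ⟨B, hB⟩ := hbdd f hf
  have hgint : Integrable g (Measure.map (fun ω => (M ω, Y ω)) P) := by
    refine Integrable.mono' (integrable_const B) hgmeas.aestronglyMeasurable ?_
    filter_upwards [hB] with p hp
    simpa [Real.norm_eq_abs] using hp
  have hswapint : Integrable (fun q : ℝ × ℝ => g q.swap) (μ ⊗ₘ ν) := by
    rw [hMY] at hgint
    exact (integrable_map_measure hgmeas.aestronglyMeasurable
      measurable_swap.aemeasurable).mp hgint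
  -- main computation
  calc ∫ ω, N (Y ω) (fun x => f (x, Y ω)) (X ω) ∂P
      = ∫ p, g p ∂(Measure.map (fun ω => (X ω, Y ω)) P) :=
        (integral_map (hX.prodMk hY).aemeasurable hgmeas.aestronglyMeasurable).symm
    _ = ∫ p, g p ∂((μ ⊗ₘ ν).map Prod.swap) := by rw [hlaw, hMY]
    _ = ∫ q, g q.swap ∂(μ ⊗ₘ ν) :=
        integral_map measurable_swap.aemeasurable hgmeas.aestronglyMeasurable
    _ = ∫ y, ∫ x, g (x, y) ∂(ν y) ∂μ := Measure.integral_compProd hswapint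
    _ = 0 := by
        have h0 : ∀ᵐ y ∂μ, ∫ x, g (x, y) ∂(ν y) = 0 := by
          filter_upwards [hStein] with y hy
          exact ((hy (ν y) inferInstance).mp rfl) _ (hf y)
        rw [integral_congr_ae h0, integral_zero]
end

section
/- Let H̃ be a class of Borel-measurable functions ℝ×ℝ → ℝ whose bounded elements are separating for joint laws (i.e. if two probability measures on ℝ² give the same integral to every bounded h ∈ H̃, they are equal). Suppose that for every bounded h ∈ H̃ there exists f_h ∈ C̃ such that N_y f_h(x,y) = h(x,y) − ∫_ℝ h(z,y) ν_y(dz) for all x ∈ ℝ and μ_Y-almost every y, with (x,y) ↦ N_y f_h(x,y) jointly measurable and integrable with respect to ℙ_{X,Y}. If 𝔼[N_Y f(X,Y)] = 0 for every f ∈ C̃, then the joint law ℙ_{X,Y} of (X,Y) equals the joint law ℙ_{M,Y} of (M,Y). -/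
open MeasureTheory ProbabilityTheory

/-- Let `H̃` be a class of Borel functions on `ℝ²` whose bounded elements
are separating for probability measures on `ℝ²`. If every bounded `h ∈ H̃` admits a
solution `f_h ∈ C̃` of the Stein equation, jointly measurable and `ℙ_{X,Y}`-integrable,
and `𝔼[N_Y f(X,Y)] = 0` for every `f ∈ C̃`, then `ℙ_{X,Y} = ℙ_{M,Y}`. -/
theorem stein_dependence_sufficient
    {Ω : Type*} [MeasurableSpace Ω] (P : Measure Ω) [IsProbabilityMeasure P]
    (M Y X : Ω → ℝ) (hM : Measurable M) (hY : Measurable Y) (hX : Measurable X)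
    (ν : Kernel ℝ ℝ) [IsMarkovKernel ν]
    (hcond : ∀ A B : Set ℝ, MeasurableSet A → MeasurableSet B →
      Measure.map (fun ω => (M ω, Y ω)) P (A ×ˢ B)
        = ∫⁻ y in B, ν y A ∂(Measure.map Y P))
    (C : Set (ℝ → ℝ)) (N : ℝ → (ℝ → ℝ) → ℝ → ℝ)
    (Ht : Set (ℝ × ℝ → ℝ)) (hHtmeas : ∀ h ∈ Ht, Measurable h)
    (hsep : ∀ P₁ P₂ : Measure (ℝ × ℝ), IsProbabilityMeasure P₁ → IsProbabilityMeasure P₂ →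
      (∀ h ∈ Ht, (∃ B : ℝ, ∀ p, |h p| ≤ B) → ∫ p, h p ∂P₁ = ∫ p, h p ∂P₂) → P₁ = P₂)
    (hsol : ∀ h ∈ Ht, (∃ B : ℝ, ∀ p, |h p| ≤ B) →
      ∃ fh : ℝ × ℝ → ℝ, (∀ y : ℝ, (fun x => fh (x, y)) ∈ C) ∧
        (∀ᵐ y ∂(Measure.map Y P), ∀ x : ℝ,
          N y (fun x' => fh (x', y)) x = h (x, y) - ∫ z, h (z, y) ∂(ν y)) ∧
        Measurable (fun p : ℝ × ℝ => N p.2 (fun x => fh (x, p.2)) p.1) ∧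
        Integrable (fun p : ℝ × ℝ => N p.2 (fun x => fh (x, p.2)) p.1)
          (Measure.map (fun ω => (X ω, Y ω)) P))
    (hzero : ∀ f : ℝ × ℝ → ℝ, (∀ y : ℝ, (fun x => f (x, y)) ∈ C) →
      ∫ ω, N (Y ω) (fun x => f (x, Y ω)) (X ω) ∂P = 0) :
    Measure.map (fun ω => (X ω, Y ω)) P = Measure.map (fun ω => (M ω, Y ω)) P := by
  set μ : Measure ℝ := Measure.map Y P with hμ
  set PXY : Measure (ℝ × ℝ) := Measure.map (fun ω => (X ω, Y ω)) P with hPXY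
  set PMY : Measure (ℝ × ℝ) := Measure.map (fun ω => (M ω, Y ω)) P with hPMY
  have hXY : Measurable fun ω => (X ω, Y ω) := hX.prodMk hY
  have hMY : Measurable fun ω => (M ω, Y ω) := hM.prodMk hY
  haveI : IsProbabilityMeasure μ := Measure.isProbabilityMeasure_map hY.aemeasurable
  haveI : IsProbabilityMeasure PXY := Measure.isProbabilityMeasure_map hXY.aemeasurable
  haveI : IsProbabilityMeasure PMY := Measure.isProbabilityMeasure_map hMY.aemeasurable
  -- PMY is the swap of the comp-prod μ ⊗ₘ ν
  have hPMY_eq : PMY = Measure.map Prod.swap (μ.compProd ν) := by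
    refine MeasureTheory.ext_of_generate_finite _
      generateFrom_prod.symm isPiSystem_prod ?_ ?_
    · rintro s ⟨A, hA, B, hB, rfl⟩
      simp only [Set.mem_setOf_eq] at hA hB
      rw [Measure.map_apply measurable_swap (hA.prod hB)]
      have : Prod.swap ⁻¹' (A ×ˢ B) = B ×ˢ A := by
        ext p; simp [Set.mem_prod, and_comm]
      rw [this, Measure.compProd_apply_prod hB hA, hPMY, hcond A B hA hB]
    · rw [Measure.map_apply measurable_swap MeasurableSet.univ]
      simp [measure_univ]
  -- marginal of PXY on the second coordinate is μ
  have hsnd : Measure.map Prod.snd PXY = μ := by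
    rw [hPXY, Measure.map_map measurable_snd hXY]
    rfl
  refine hsep PXY PMY inferInstance inferInstance ?_
  intro h hmem hb
  obtain ⟨B, hB⟩ := hb
  have hhm : Measurable h := hHtmeas h hmem
  obtain ⟨fh, hfhC, hae, hNmeas, hNint⟩ := hsol h hmem ⟨B, hB⟩
  set g : ℝ → ℝ := fun y => ∫ z, h (z, y) ∂(ν y) with hg
  have hgB : ∀ y, |g y| ≤ B := by
    intro y
    calc |g y| ≤ ∫ z, |h (z, y)| ∂(ν y) := by simpa using norm_integral_le_integral_norm (fun z => h (z, y))
    _ ≤ ∫ _z, B ∂(ν y) := by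
        refine integral_mono_of_nonneg (Filter.Eventually.of_forall fun z => abs_nonneg _)
          (integrable_const _) (Filter.Eventually.of_forall fun z => hB _)
    _ = B := by simp
  have hgm : StronglyMeasurable g := by
    have : StronglyMeasurable (Function.uncurry fun y z => h (z, y)) := by
      exact (hhm.comp measurable_swap).stronglyMeasurable
    exact this.integral_kernel_prod_right
  -- h is integrable w.r.t. any probability measure on ℝ²
  have hint : ∀ (Q : Measure (ℝ × ℝ)) [IsProbabilityMeasure Q], Integrable h Q := by
    intro Q _
    exact (integrable_const B).mono' hhm.aestronglyMeasurable
      (Filter.Eventually.of_forall fun p => by simpa using hB p)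
  have hgint : Integrable (fun p : ℝ × ℝ => g p.2) PXY := by
    refine (integrable_const B).mono' (hgm.measurable.comp measurable_snd).aestronglyMeasurable
      (Filter.Eventually.of_forall fun p => by simpa using hgB p.2)
  -- the Stein identity holds PXY-a.e. on ℝ²
  have haeXY : ∀ᵐ p ∂PXY, N p.2 (fun x => fh (x, p.2)) p.1 = h p - g p.2 := by
    have h2 : ∀ᵐ y ∂(Measure.map Prod.snd PXY), ∀ x : ℝ,
        N y (fun x' => fh (x', y)) x = h (x, y) - g y := by rw [hsnd]; exact hae
    have h3 := ae_of_ae_map (measurable_snd.aemeasurable : AEMeasurable Prod.snd PXY) h2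
    filter_upwards [h3] with p hp
    exact hp p.1
  -- from hzero: the integral of the Stein operator vanishes
  have hz : ∫ p, N p.2 (fun x => fh (x, p.2)) p.1 ∂PXY = 0 := by
    rw [hPXY, integral_map hXY.aemeasurable hNmeas.aestronglyMeasurable]
    exact hzero fh hfhC
  -- hence ∫ h dPXY = ∫ g dμ
  have hXYeq : ∫ p, h p ∂PXY = ∫ y, g y ∂μ := by
    have := integral_congr_ae haeXY
    rw [hz] at this
    have hsub : ∫ p, (h p - g p.2) ∂PXY = ∫ p, h p ∂PXY - ∫ p, g p.2 ∂PXY :=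
      integral_sub (hint PXY) hgint
    have hgμ : ∫ p, g p.2 ∂PXY = ∫ y, g y ∂μ := by
      rw [← hsnd, integral_map measurable_snd.aemeasurable hgm.aestronglyMeasurable]
    rw [hsub, hgμ] at this
    linarith
  -- and ∫ h dPMY = ∫ g dμ by disintegration
  have hMYeq : ∫ p, h p ∂PMY = ∫ y, g y ∂μ := by
    rw [hPMY_eq, integral_map measurable_swap.aemeasurable hhm.aestronglyMeasurable]
    have : Integrable (fun q : ℝ × ℝ => h q.swap) (μ.compProd ν) := by
      refine (integrable_const B).mono' (hhm.comp measurable_swap).aestronglyMeasurable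
        (Filter.Eventually.of_forall fun p => by simpa using hB p.swap)
    rw [MeasureTheory.Measure.integral_compProd this]
    simp only [Prod.swap_prod_mk, hg]
  rw [hXYeq, hMYeq]
end

section
/- Suppose: (i) for μ_Y-almost every y, N_y is a Stein operator for ν_y on C (i.e. for every probability measure ρ on ℝ: ρ = ν_y if and only if ∫ N_y f dρ = 0 for all f ∈ C); (ii) for every f ∈ C̃ the map (x,y) ↦ N_y f(x,y) is jointly measurable, essentially bounded with respect to ℙ_{M,Y}, and continuous in y for each fixed x; (iii) there is a class H̃ of Borel-measurable functions ℝ×ℝ → ℝ whose bounded elements are separating for probability measures on ℝ², such that every bounded h ∈ H̃ admits a solution f_h ∈ C̃ of the Stein equation N_y f_h(x,y) = h(x,y) − ∫_ℝ h(z,y) ν_y(dz) (for all x and μ_Y-a.e. y) with (x,y) ↦ N_y f_h(x,y) integrable with respect to ℙ_{X,Y}. Then the joint law ℙ_{X,Y} of (X,Y) equals the joint law ℙ_{M,Y} of (M,Y) if and only if 𝔼[N_Y f(X,Y)] = 0 for every f ∈ C̃. -/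
open MeasureTheory ProbabilityTheory

/-- **Main theorem.** Under the Stein-operator hypotheses, essential
boundedness/measurability/continuity-in-`y` of `(x,y) ↦ N y f(·,y) x` for `f ∈ C̃`,
and the existence of a separating class `H̃` whose bounded elements admit Stein-equation
solutions in `C̃`, the joint law `ℙ_{X,Y}` equals `ℙ_{M,Y}` if and only if
`𝔼[N_Y f(X,Y)] = 0` for every `f ∈ C̃`. -/
theorem stein_dependence_characterization
    {Ω : Type*} [MeasurableSpace Ω] (P : Measure Ω) [IsProbabilityMeasure P]
    (M Y X : Ω → ℝ) (hM : Measurable M) (hY : Measurable Y) (hX : Measurable X)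
    (ν : Kernel ℝ ℝ) [IsMarkovKernel ν]
    (hcond : ∀ A B : Set ℝ, MeasurableSet A → MeasurableSet B →
      Measure.map (fun ω => (M ω, Y ω)) P (A ×ˢ B)
        = ∫⁻ y in B, ν y A ∂(Measure.map Y P))
    (C : Set (ℝ → ℝ)) (N : ℝ → (ℝ → ℝ) → ℝ → ℝ)
    (hStein : ∀ᵐ y ∂(Measure.map Y P), ∀ ρ : Measure ℝ, IsProbabilityMeasure ρ →
      (ρ = ν y ↔ ∀ f ∈ C, ∫ x, N y f x ∂ρ = 0))
    (hmeas : ∀ f : ℝ × ℝ → ℝ, (∀ y : ℝ, (fun x => f (x, y)) ∈ C) →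
      Measurable (fun p : ℝ × ℝ => N p.2 (fun x => f (x, p.2)) p.1))
    (hbdd : ∀ f : ℝ × ℝ → ℝ, (∀ y : ℝ, (fun x => f (x, y)) ∈ C) →
      ∃ B : ℝ, ∀ᵐ p ∂(Measure.map (fun ω => (M ω, Y ω)) P),
        |N p.2 (fun x => f (x, p.2)) p.1| ≤ B)
    (hcont : ∀ f : ℝ × ℝ → ℝ, (∀ y : ℝ, (fun x => f (x, y)) ∈ C) →
      ∀ x : ℝ, Continuous (fun y => N y (fun x' => f (x', y)) x))
    (Ht : Set (ℝ × ℝ → ℝ)) (hHtmeas : ∀ h ∈ Ht, Measurable h)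
    (hsep : ∀ P₁ P₂ : Measure (ℝ × ℝ), IsProbabilityMeasure P₁ → IsProbabilityMeasure P₂ →
      (∀ h ∈ Ht, (∃ B : ℝ, ∀ p, |h p| ≤ B) → ∫ p, h p ∂P₁ = ∫ p, h p ∂P₂) → P₁ = P₂)
    (hsol : ∀ h ∈ Ht, (∃ B : ℝ, ∀ p, |h p| ≤ B) →
      ∃ fh : ℝ × ℝ → ℝ, (∀ y : ℝ, (fun x => fh (x, y)) ∈ C) ∧
        (∀ᵐ y ∂(Measure.map Y P), ∀ x : ℝ,
          N y (fun x' => fh (x', y)) x = h (x, y) - ∫ z, h (z, y) ∂(ν y)) ∧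
        Integrable (fun p : ℝ × ℝ => N p.2 (fun x => fh (x, p.2)) p.1)
          (Measure.map (fun ω => (X ω, Y ω)) P)) :
    Measure.map (fun ω => (X ω, Y ω)) P = Measure.map (fun ω => (M ω, Y ω)) P
      ↔ ∀ f : ℝ × ℝ → ℝ, (∀ y : ℝ, (fun x => f (x, y)) ∈ C) →
          ∫ ω, N (Y ω) (fun x => f (x, Y ω)) (X ω) ∂P = 0 := by
  have hXY : Measurable fun ω => (X ω, Y ω) := hX.prodMk hY
  have hMY : Measurable fun ω => (M ω, Y ω) := hM.prodMk hY
  set μY := Measure.map Y P with hμYdef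
  haveI hμYP : IsProbabilityMeasure μY := Measure.isProbabilityMeasure_map hY.aemeasurable
  haveI hPXY : IsProbabilityMeasure (Measure.map (fun ω => (X ω, Y ω)) P) :=
    Measure.isProbabilityMeasure_map hXY.aemeasurable
  haveI hPMY : IsProbabilityMeasure (Measure.map (fun ω => (M ω, Y ω)) P) :=
    Measure.isProbabilityMeasure_map hMY.aemeasurable
  -- The joint law of (M, Y) is the swap of μY ⊗ₘ ν.
  have hkey : Measure.map (fun ω => (M ω, Y ω)) P = Measure.map Prod.swap (μY ⊗ₘ ν) := by
    haveI : IsProbabilityMeasure (Measure.map (Prod.swap : ℝ × ℝ → ℝ × ℝ) (μY ⊗ₘ ν)) :=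
      Measure.isProbabilityMeasure_map measurable_swap.aemeasurable
    refine ext_of_generate_finite _ generateFrom_prod.symm isPiSystem_prod ?_ ?_
    · rintro s ⟨A, (hA : MeasurableSet A), B, (hB : MeasurableSet B), rfl⟩
      rw [hcond A B hA hB, Measure.map_apply measurable_swap (hA.prod hB),
        Set.preimage_swap_prod, Measure.compProd_apply_prod hB hA]
    · simp [measure_univ]
  -- Integral representation over the law of (M, Y).
  have hrep : ∀ g : ℝ × ℝ → ℝ, Measurable g →
      Integrable g (Measure.map (fun ω => (M ω, Y ω)) P) →
      ∫ p, g p ∂(Measure.map (fun ω => (M ω, Y ω)) P)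
        = ∫ y, ∫ m, g (m, y) ∂(ν y) ∂μY := by
    intro g hg hgi
    rw [hkey] at hgi ⊢
    rw [integral_map measurable_swap.aemeasurable hg.aestronglyMeasurable]
    have hgi' : Integrable (fun q => g (Prod.swap q)) (μY ⊗ₘ ν) :=
      (integrable_map_measure hg.aestronglyMeasurable measurable_swap.aemeasurable).mp hgi
    rw [Measure.integral_compProd hgi']
    rfl
  -- Integral transfer for the law of (X, Y).
  have hXYint : ∀ g : ℝ × ℝ → ℝ, Measurable g →
      ∫ p, g p ∂(Measure.map (fun ω => (X ω, Y ω)) P)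
        = ∫ ω, g (X ω, Y ω) ∂P := fun g hg =>
    integral_map hXY.aemeasurable hg.aestronglyMeasurable
  constructor
  · -- forward
    intro heq f hf
    have hg := hmeas f hf
    have h1 : ∫ ω, N (Y ω) (fun x => f (x, Y ω)) (X ω) ∂P
        = ∫ p, (fun p : ℝ × ℝ => N p.2 (fun x => f (x, p.2)) p.1) p
            ∂(Measure.map (fun ω => (X ω, Y ω)) P) := (hXYint _ hg).symm
    rw [h1, heq]
    obtain ⟨B, hB⟩ := hbdd f hf
    have hint : Integrable (fun p : ℝ × ℝ => N p.2 (fun x => f (x, p.2)) p.1)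
        (Measure.map (fun ω => (M ω, Y ω)) P) := by
      refine ⟨hg.aestronglyMeasurable, HasFiniteIntegral.of_bounded (C := B) ?_⟩
      filter_upwards [hB] with p hp
      simpa [Real.norm_eq_abs] using hp
    rw [hrep _ hg hint]
    have : ∀ᵐ y ∂μY, (∫ m, N y (fun x => f (x, y)) m ∂(ν y)) = 0 := by
      filter_upwards [hStein] with y hy
      exact ((hy (ν y) inferInstance).mp rfl) _ (hf y)
    rw [integral_congr_ae this, integral_zero]
  · -- backward
    intro hzero
    refine hsep _ _ hPXY hPMY ?_
    intro h hh hBex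
    obtain ⟨B, hBb⟩ := hBex
    obtain ⟨fh, hfhC, hfheq, hfhint⟩ := hsol h hh ⟨B, hBb⟩
    have hg := hmeas fh hfhC
    have hhm := hHtmeas h hh
    -- c y = ∫ z, h (z, y) ∂(ν y)
    set c : ℝ → ℝ := fun y => ∫ z, h (z, y) ∂(ν y) with hcdef
    have hc : StronglyMeasurable c := by
      have : StronglyMeasurable fun q : ℝ × ℝ => h (Prod.swap q) :=
        (hhm.comp measurable_swap).stronglyMeasurable
      exact this.integral_kernel_prod_right' (κ := ν)
    have hcb : ∀ y, |c y| ≤ B := by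
      intro y
      rw [← Real.norm_eq_abs]
      calc ‖∫ z, h (z, y) ∂(ν y)‖ ≤ B * ((ν y) Set.univ).toReal :=
            norm_integral_le_of_norm_le_const
              (Filter.Eventually.of_forall fun z => by
                simpa [Real.norm_eq_abs] using hBb (z, y))
        _ = B := by simp
    -- a.e. Stein equation along (X, Y)
    have haeP : ∀ᵐ ω ∂P, ∀ x : ℝ,
        N (Y ω) (fun x' => fh (x', Y ω)) x = h (x, Y ω) - c (Y ω) :=
      ae_of_ae_map hY.aemeasurable hfheq
    have hint_h : Integrable (fun ω => h (X ω, Y ω)) P := by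
      refine ⟨(hhm.comp hXY).aestronglyMeasurable,
        HasFiniteIntegral.of_bounded (C := B) (Filter.Eventually.of_forall fun ω => ?_)⟩
      simpa [Real.norm_eq_abs] using hBb (X ω, Y ω)
    have hint_c : Integrable (fun ω => c (Y ω)) P := by
      refine ⟨(hc.measurable.comp hY).aestronglyMeasurable,
        HasFiniteIntegral.of_bounded (C := B) (Filter.Eventually.of_forall fun ω => ?_)⟩
      simpa [Real.norm_eq_abs] using hcb (Y ω)
    have h0 : ∫ ω, N (Y ω) (fun x => fh (x, Y ω)) (X ω) ∂P = 0 := hzero fh hfhC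
    have h2 : ∫ ω, N (Y ω) (fun x => fh (x, Y ω)) (X ω) ∂P
        = ∫ ω, (h (X ω, Y ω) - c (Y ω)) ∂P := by
      refine integral_congr_ae ?_
      filter_upwards [haeP] with ω hω
      exact hω (X ω)
    have h3 : ∫ ω, (h (X ω, Y ω) - c (Y ω)) ∂P
        = ∫ ω, h (X ω, Y ω) ∂P - ∫ ω, c (Y ω) ∂P := integral_sub hint_h hint_c
    -- ∫ c ∘ Y dP = ∫ h d(law of (M,Y))
    have hint_hmy : Integrable h (Measure.map (fun ω => (M ω, Y ω)) P) := by
      refine ⟨hhm.aestronglyMeasurable,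
        HasFiniteIntegral.of_bounded (C := B) (Filter.Eventually.of_forall fun p => ?_)⟩
      simpa [Real.norm_eq_abs] using hBb p
    have h4 : ∫ ω, c (Y ω) ∂P = ∫ p, h p ∂(Measure.map (fun ω => (M ω, Y ω)) P) := by
      rw [hrep h hhm hint_hmy, ← integral_map hY.aemeasurable hc.aestronglyMeasurable]
    have h5 : ∫ ω, h (X ω, Y ω) ∂P
        = ∫ p, h p ∂(Measure.map (fun ω => (X ω, Y ω)) P) := (hXYint h hhm).symm
    rw [h2, h3, h4, h5] at h0
    linarith
end

section
/- Suppose M and Y are independent, so that ν_y = μ_M (the law of M) for μ_Y-almost every y, and let N be a single Stein operator for μ_M on C (i.e. for every probability measure ρ on ℝ: ρ = μ_M if and only if ∫ N f dρ = 0 for all f ∈ C). Assume for every f ∈ C̃ the map (x,y) ↦ N f(·,y)(x) is jointly measurable, essentially bounded with respect to μ_M ⊗ μ_Y, and continuous in y for each fixed x, and assume there is a class H̃ of Borel-measurable functions ℝ×ℝ → ℝ whose bounded elements are separating for probability measures on ℝ², such that every bounded h ∈ H̃ admits a solution f_h ∈ C̃ of N f_h(·,y)(x) = h(x,y) − ∫_ℝ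 h(z,y) μ_M(dz) (for all x and μ_Y-a.e. y) with (x,y) ↦ N f_h(·,y)(x) integrable with respect to ℙ_{X,Y}. Then the joint law ℙ_{X,Y} equals the product measure μ_M ⊗ μ_Y (i.e. X has law μ_M and X is independent of Y) if and only if 𝔼[N f(·,Y)(X)] = 0 for every f ∈ C̃. -/
open MeasureTheory ProbabilityTheory

/-- **independent case.** If `M` and `Y` are independent and `N` is a single
Stein operator for `μ_M` on `C`, then under measurability/essential boundedness/continuity
hypotheses and the existence of a separating class `H̃` whose bounded elements admit
Stein-equation solutions in `C̃`, the joint law `ℙ_{X,Y}` equals the product measure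
`μ_M ⊗ μ_Y` if and only if `𝔼[N f(·,Y)(X)] = 0` for every `f ∈ C̃`. -/
theorem stein_independence_characterization
    {Ω : Type*} [MeasurableSpace Ω] (P : Measure Ω) [IsProbabilityMeasure P]
    (M Y X : Ω → ℝ) (hM : Measurable M) (hY : Measurable Y) (hX : Measurable X)
    (hindep : IndepFun M Y P)
    (C : Set (ℝ → ℝ)) (N : (ℝ → ℝ) → ℝ → ℝ)
    (hStein : ∀ ρ : Measure ℝ, IsProbabilityMeasure ρ →
      (ρ = Measure.map M P ↔ ∀ f ∈ C, ∫ x, N f x ∂ρ = 0))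
    (hmeas : ∀ f : ℝ × ℝ → ℝ, (∀ y : ℝ, (fun x => f (x, y)) ∈ C) →
      Measurable (fun p : ℝ × ℝ => N (fun x => f (x, p.2)) p.1))
    (hbdd : ∀ f : ℝ × ℝ → ℝ, (∀ y : ℝ, (fun x => f (x, y)) ∈ C) →
      ∃ B : ℝ, ∀ᵐ p ∂((Measure.map M P).prod (Measure.map Y P)),
        |N (fun x => f (x, p.2)) p.1| ≤ B)
    (hcont : ∀ f : ℝ × ℝ → ℝ, (∀ y : ℝ, (fun x => f (x, y)) ∈ C) →
      ∀ x : ℝ, Continuous (fun y => N (fun x' => f (x', y)) x))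
    (Ht : Set (ℝ × ℝ → ℝ)) (hHtmeas : ∀ h ∈ Ht, Measurable h)
    (hsep : ∀ P₁ P₂ : Measure (ℝ × ℝ), IsProbabilityMeasure P₁ → IsProbabilityMeasure P₂ →
      (∀ h ∈ Ht, (∃ B : ℝ, ∀ p, |h p| ≤ B) → ∫ p, h p ∂P₁ = ∫ p, h p ∂P₂) → P₁ = P₂)
    (hsol : ∀ h ∈ Ht, (∃ B : ℝ, ∀ p, |h p| ≤ B) →
      ∃ fh : ℝ × ℝ → ℝ, (∀ y : ℝ, (fun x => fh (x, y)) ∈ C) ∧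
        (∀ᵐ y ∂(Measure.map Y P), ∀ x : ℝ,
          N (fun x' => fh (x', y)) x = h (x, y) - ∫ z, h (z, y) ∂(Measure.map M P)) ∧
        Integrable (fun p : ℝ × ℝ => N (fun x => fh (x, p.2)) p.1)
          (Measure.map (fun ω => (X ω, Y ω)) P)) :
    Measure.map (fun ω => (X ω, Y ω)) P = (Measure.map M P).prod (Measure.map Y P)
      ↔ ∀ f : ℝ × ℝ → ℝ, (∀ y : ℝ, (fun x => f (x, y)) ∈ C) →
          ∫ ω, N (fun x => f (x, Y ω)) (X ω) ∂P = 0 := by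
  have hMp : IsProbabilityMeasure (Measure.map M P) :=
    Measure.isProbabilityMeasure_map hM.aemeasurable
  have hYp : IsProbabilityMeasure (Measure.map Y P) :=
    Measure.isProbabilityMeasure_map hY.aemeasurable
  have hXYm : Measurable (fun ω => (X ω, Y ω)) := hX.prodMk hY
  have hXYp : IsProbabilityMeasure (Measure.map (fun ω => (X ω, Y ω)) P) :=
    Measure.isProbabilityMeasure_map hXYm.aemeasurable
  haveI := hMp; haveI := hYp; haveI := hXYp
  constructor
  · -- forward direction
    intro hlaw f hf
    have hg : Measurable (fun p : ℝ × ℝ => N (fun x => f (x, p.2)) p.1) := hmeas f hf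
    obtain ⟨B, hB⟩ := hbdd f hf
    have hint : Integrable (fun p : ℝ × ℝ => N (fun x => f (x, p.2)) p.1)
        ((Measure.map M P).prod (Measure.map Y P)) := by
      refine Integrable.mono' (integrable_const B) hg.aestronglyMeasurable ?_
      filter_upwards [hB] with p hp
      simpa [Real.norm_eq_abs] using hp
    have h1 : ∫ ω, N (fun x => f (x, Y ω)) (X ω) ∂P
        = ∫ p : ℝ × ℝ, N (fun x => f (x, p.2)) p.1
            ∂(Measure.map (fun ω => (X ω, Y ω)) P) := by
      rw [integral_map hXYm.aemeasurable]
      · exact (hg.aestronglyMeasurable)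
    rw [h1, hlaw, integral_prod_symm _ hint]
    have hzero : ∀ y : ℝ, ∫ x, N (fun x' => f (x', y)) x ∂(Measure.map M P) = 0 := by
      intro y
      exact ((hStein (Measure.map M P) hMp).mp rfl) _ (hf y)
    simp [hzero]
  · -- backward direction
    intro hzero
    refine hsep _ _ hXYp inferInstance ?_
    intro h hh hb
    obtain ⟨B, hB⟩ := hb
    obtain ⟨fh, hfC, hae, hint⟩ := hsol h hh ⟨B, hB⟩
    have hhm : Measurable h := hHtmeas h hh
    set m : ℝ → ℝ := fun y => ∫ z, h (z, y) ∂(Measure.map M P) with hm_def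
    have hmsm : StronglyMeasurable m :=
      (hhm.comp measurable_swap).stronglyMeasurable.integral_prod_right'
    have hmB : ∀ y, |m y| ≤ B := by
      intro y
      have := norm_integral_le_of_norm_le_const (μ := Measure.map M P)
        (f := fun z => h (z, y)) (C := B) (ae_of_all _ fun z => by
          simpa [Real.norm_eq_abs] using hB (z, y))
      simpa [Real.norm_eq_abs] using this
    -- integrabilities over P
    have hint1 : Integrable (fun ω => h (X ω, Y ω)) P := by
      refine Integrable.mono' (integrable_const B)
        ((hhm.comp hXYm).aestronglyMeasurable) ?_
      exact ae_of_all _ fun ω => by simpa [Real.norm_eq_abs] using hB (X ω, Y ω)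
    have hint2 : Integrable (fun ω => m (Y ω)) P := by
      refine Integrable.mono' (integrable_const B)
        ((hmsm.measurable.comp hY).aestronglyMeasurable) ?_
      exact ae_of_all _ fun ω => by simpa [Real.norm_eq_abs] using hmB (Y ω)
    -- the Stein equation a.e. over P
    have haeP : ∀ᵐ ω ∂P, ∀ x : ℝ,
        N (fun x' => fh (x', Y ω)) x = h (x, Y ω) - m (Y ω) :=
      ae_of_ae_map hY.aemeasurable hae
    have hNzero : ∫ ω, N (fun x => fh (x, Y ω)) (X ω) ∂P = 0 := hzero fh hfC
    have hkey : ∫ ω, h (X ω, Y ω) ∂P = ∫ ω, m (Y ω) ∂P := by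
      have hcongr : ∫ ω, N (fun x => fh (x, Y ω)) (X ω) ∂P
          = ∫ ω, (h (X ω, Y ω) - m (Y ω)) ∂P := by
        refine integral_congr_ae ?_
        filter_upwards [haeP] with ω hω
        exact hω (X ω)
      rw [hNzero, integral_sub hint1 hint2] at hcongr
      linarith
    -- compute both sides
    have hL : ∫ p, h p ∂(Measure.map (fun ω => (X ω, Y ω)) P)
        = ∫ ω, h (X ω, Y ω) ∂P :=
      integral_map hXYm.aemeasurable hhm.aestronglyMeasurable
    have hintprod : Integrable h ((Measure.map M P).prod (Measure.map Y P)) := by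
      refine Integrable.mono' (integrable_const B) hhm.aestronglyMeasurable ?_
      exact ae_of_all _ fun p => by simpa [Real.norm_eq_abs] using hB p
    have hR : ∫ p, h p ∂((Measure.map M P).prod (Measure.map Y P))
        = ∫ y, m y ∂(Measure.map Y P) := by
      rw [integral_prod_symm _ hintprod]
    have hR2 : ∫ y, m y ∂(Measure.map Y P) = ∫ ω, m (Y ω) ∂P :=
      integral_map hY.aemeasurable hmsm.aestronglyMeasurable
    rw [hL, hkey, ← hR2, hR]
end
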